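/- arXiv:2012.00990 — 2 statements merged into one kernel-verified Lean document; each statement's English description precedes it below -/
import Mathlib

section
/- Let g_V : [0,∞)^d → [0,∞) be continuous and positively 1-homogeneous with g_V(x) ≥ max_j x_j for all x, let γ ∈ (0,1], and define g_X(x) = min_{s ∈ [0, min(x)/γ]} { s + g_V(x − γ s 1) } for x ∈ [0,∞)^d, where 1 = (1,…,1). Let m_V = min_{y : min_j y_j = 1} g_V(y). Then min over {x : min_j x_j = 1} of g_X equals m_V if γ < 1/m_V, and equals 1/γ if γ ≥ 1/m_V. Equivalently, writing η^V = 1/m_V and η^X = [min_{x : min(x)=1} g_X(x)]^{−1}, one has η^X = η^V if γ < η^V and η^X = γ if η^V ≤ γ ≤ 1. -/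
/-!
On `{x : min x = 1}` the vector `x - γs𝟙` has minimum `1 - γs`, so homogeneity gives
`g_V(x - γs𝟙) ≥ (1 - γs) m_V`, and `s + g_V(x - γs𝟙)` dominates the convex combination
`(1 - γs) m_V + γs (1/γ) ≥ min(m_V, 1/γ)`. Both values are attained: `m_V` at `s = 0`, and `1/γ`
at `x = 𝟙`, `s = 1/γ`, where `g_V(0) = 0`. Hence `min g_X = min(m_V, 1/γ)`.
-/

open Set

def IsPosHomogeneous {E : Type*} [SMul ℝ E] (g : E → ℝ) : Prop :=
  ∀ t : ℝ, 0 < t → ∀ x, g (t • x) = t * g x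

def DominatesMax {ι : Type*} (g : (ι → ℝ) → ℝ) : Prop :=
  ∀ x : ι → ℝ, (∀ j, 0 ≤ x j) → ∀ j, x j ≤ g x

def unitMinSet (ι : Type*) : Set (ι → ℝ) := {y | (∀ j, 0 ≤ y j) ∧ (⨅ j, y j) = 1}

noncomputable def mixtureGauge {ι : Type*} (g : (ι → ℝ) → ℝ) (γ : ℝ) (x : ι → ℝ) : ℝ :=
  sInf ((fun s => s + g (fun j => x j - γ * s)) '' Icc 0 ((⨅ j, x j) / γ))

lemma IsPosHomogeneous.map_zero {E : Type*} [AddCommGroup E] [Module ℝ E] {g : E → ℝ}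
    (hg : IsPosHomogeneous g) : g 0 = 0 := by
  have h := hg 2 two_pos 0
  rw [smul_zero] at h
  linarith

lemma const_one_mem_unitMinSet {ι : Type*} [Nonempty ι] : (fun _ => 1 : ι → ℝ) ∈ unitMinSet ι :=
  ⟨fun _ => zero_le_one, ciInf_const⟩

section Gauge

variable {ι : Type*} [Finite ι] [Nonempty ι] {g : (ι → ℝ) → ℝ}

lemma DominatesMax.iInf_le (hg : DominatesMax g) {x : ι → ℝ} (hx : ∀ j, 0 ≤ x j) :
    ⨅ j, x j ≤ g x :=
  (ciInf_le (Finite.bddBelow_range x) (Classical.arbitrary ι)).trans (hg x hx _)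

lemma DominatesMax.one_le_of_mem_image_unitMinSet (hg : DominatesMax g) :
    ∀ z ∈ g '' unitMinSet ι, 1 ≤ z := by
  rintro _ ⟨y, ⟨hy, hy_min⟩, rfl⟩
  exact hy_min ▸ hg.iInf_le hy

lemma DominatesMax.one_le_sInf_image_unitMinSet (hg : DominatesMax g) :
    1 ≤ sInf (g '' unitMinSet ι) :=
  le_csInf ⟨_, mem_image_of_mem g const_one_mem_unitMinSet⟩ hg.one_le_of_mem_image_unitMinSet

lemma iInf_mul_sInf_image_unitMinSet_le (hg_hom : IsPosHomogeneous g) (hg_max : DominatesMax g)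
    {z : ι → ℝ} (hz : ∀ j, 0 ≤ z j) : (⨅ j, z j) * sInf (g '' unitMinSet ι) ≤ g z := by
  have ht0 : 0 ≤ ⨅ j, z j := le_ciInf hz
  set t := ⨅ j, z j
  rcases ht0.eq_or_lt with ht | ht
  · rw [← ht, zero_mul]
    exact ht0.trans (hg_max.iInf_le hz)
  have hw : t⁻¹ • z ∈ unitMinSet ι := by
    refine ⟨fun j => mul_nonneg (inv_nonneg.2 ht.le) (hz j), ?_⟩
    simp only [Pi.smul_apply, smul_eq_mul]
    rw [← Real.mul_iInf_of_nonneg (inv_nonneg.2 ht.le), inv_mul_cancel₀ ht.ne']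
  calc t * sInf (g '' unitMinSet ι)
      ≤ t * g (t⁻¹ • z) :=
        mul_le_mul_of_nonneg_left
          (csInf_le ⟨1, hg_max.one_le_of_mem_image_unitMinSet⟩ (mem_image_of_mem g hw)) ht.le
    _ = g z := by rw [← hg_hom t ht, smul_inv_smul₀ ht.ne']

variable {γ : ℝ}

lemma min_le_add_apply_sub_smul_one (hg_hom : IsPosHomogeneous g) (hg_max : DominatesMax g)
    (hγ : 0 < γ) {x : ι → ℝ} (hx : x ∈ unitMinSet ι) {s : ℝ} (hs : s ∈ Icc 0 (1 / γ)) :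
    min (sInf (g '' unitMinSet ι)) (1 / γ) ≤ s + g (fun j => x j - γ * s) := by
  set mV := sInf (g '' unitMinSet ι)
  have hγs : γ * s ≤ 1 := (le_div_iff₀' hγ).1 hs.2
  have hγs0 : 0 ≤ γ * s := mul_nonneg hγ.le hs.1
  have hz : ∀ j, 0 ≤ x j - γ * s := fun j => by
    have := hx.2 ▸ ciInf_le (Finite.bddBelow_range x) j
    linarith
  have hz_min : ⨅ j, (x j - γ * s) = 1 - γ * s := by
    rw [← hx.2]
    exact ((OrderIso.subRight (γ * s)).map_ciInf (Finite.bddBelow_range x)).symm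
  have hg_z := iInf_mul_sInf_image_unitMinSet_le hg_hom hg_max hz
  rw [hz_min] at hg_z
  calc min mV (1 / γ) = (1 - γ * s) * min mV (1 / γ) + γ * s * min mV (1 / γ) := by ring
    _ ≤ (1 - γ * s) * mV + γ * s * (1 / γ) :=
        add_le_add (mul_le_mul_of_nonneg_left (min_le_left _ _) (by linarith))
          (mul_le_mul_of_nonneg_left (min_le_right _ _) hγs0)
    _ = s + (1 - γ * s) * mV := by field_simp; ring
    _ ≤ s + g (fun j => x j - γ * s) := by linarith

lemma min_mem_lowerBounds_mixture (hg_hom : IsPosHomogeneous g) (hg_max : DominatesMax g)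
    (hγ : 0 < γ) {x : ι → ℝ} (hx : x ∈ unitMinSet ι) :
    min (sInf (g '' unitMinSet ι)) (1 / γ) ∈
      lowerBounds ((fun s => s + g (fun j => x j - γ * s)) '' Icc 0 (1 / γ)) := by
  rintro _ ⟨s, hs, rfl⟩
  exact min_le_add_apply_sub_smul_one hg_hom hg_max hγ hx hs

lemma min_le_mixtureGauge (hg_hom : IsPosHomogeneous g) (hg_max : DominatesMax g) (hγ : 0 < γ)
    {x : ι → ℝ} (hx : x ∈ unitMinSet ι) :
    min (sInf (g '' unitMinSet ι)) (1 / γ) ≤ mixtureGauge g γ x := by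
  rw [mixtureGauge, hx.2]
  have h0 : (0 : ℝ) ∈ Icc 0 (1 / γ) := ⟨le_rfl, by positivity⟩
  exact le_csInf ⟨_, mem_image_of_mem _ h0⟩ (min_mem_lowerBounds_mixture hg_hom hg_max hγ hx)

lemma mixtureGauge_le (hg_hom : IsPosHomogeneous g) (hg_max : DominatesMax g) (hγ : 0 < γ)
    {x : ι → ℝ} (hx : x ∈ unitMinSet ι) {s : ℝ} (hs : s ∈ Icc 0 (1 / γ)) :
    mixtureGauge g γ x ≤ s + g (fun j => x j - γ * s) := by
  rw [mixtureGauge, hx.2]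
  exact csInf_le ⟨_, min_mem_lowerBounds_mixture hg_hom hg_max hγ hx⟩ (mem_image_of_mem _ hs)

lemma sInf_image_mixtureGauge (hg_hom : IsPosHomogeneous g) (hg_max : DominatesMax g)
    (hγ : 0 < γ) :
    sInf (mixtureGauge g γ '' unitMinSet ι) = min (sInf (g '' unitMinSet ι)) (1 / γ) := by
  set M := min (sInf (g '' unitMinSet ι)) (1 / γ)
  have h_ne (f : (ι → ℝ) → ℝ) : (f '' unitMinSet ι).Nonempty :=
    ⟨_, mem_image_of_mem f const_one_mem_unitMinSet⟩
  have h_lb : M ∈ lowerBounds (mixtureGauge g γ '' unitMinSet ι) := by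
    rintro _ ⟨x, hx, rfl⟩
    exact min_le_mixtureGauge hg_hom hg_max hγ hx
  have h_le {x : ι → ℝ} (hx : x ∈ unitMinSet ι) :
      sInf (mixtureGauge g γ '' unitMinSet ι) ≤ mixtureGauge g γ x :=
    csInf_le ⟨_, h_lb⟩ (mem_image_of_mem _ hx)
  have h_le_gauge : sInf (mixtureGauge g γ '' unitMinSet ι) ≤ sInf (g '' unitMinSet ι) := by
    refine le_csInf (h_ne g) ?_
    rintro _ ⟨y, hy, rfl⟩
    calc _ ≤ mixtureGauge g γ y := h_le hy
      _ ≤ 0 + g (fun j => y j - γ * 0) :=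
        mixtureGauge_le hg_hom hg_max hγ hy ⟨le_rfl, by positivity⟩
      _ = g y := by simp
  have h_le_inv : sInf (mixtureGauge g γ '' unitMinSet ι) ≤ 1 / γ :=
    calc _ ≤ mixtureGauge g γ (fun _ => 1) := h_le const_one_mem_unitMinSet
      _ ≤ 1 / γ + g (fun _ => 1 - γ * (1 / γ)) :=
        mixtureGauge_le hg_hom hg_max hγ const_one_mem_unitMinSet ⟨by positivity, le_rfl⟩
      _ = 1 / γ := by
        rw [mul_one_div_cancel hγ.ne', sub_self, ← Pi.zero_def, hg_hom.map_zero, add_zero]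
  exact le_antisymm (le_min h_le_gauge h_le_inv) (le_csInf (h_ne _) h_lb)

end Gauge

theorem eta_of_mixture_general
    {d : ℕ} (hd : 0 < d)
    (gV : (Fin d → ℝ) → ℝ)
    (hghomog : ∀ t : ℝ, 0 < t → ∀ x, gV (t • x) = t * gV x)
    (hgmax : ∀ x : Fin d → ℝ, (∀ j, 0 ≤ x j) → ∀ j, x j ≤ gV x)
    (γ : ℝ) (hγ0 : 0 < γ)
    (gX : (Fin d → ℝ) → ℝ)
    (hgX : ∀ x : Fin d → ℝ, (∀ j, 0 ≤ x j) →
      gX x = sInf ((fun s => s + gV (fun j => x j - γ * s)) ''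
        Set.Icc (0:ℝ) ((⨅ j, x j) / γ)))
    (mV mX : ℝ)
    (hmV : mV = sInf (gV '' {y : Fin d → ℝ | (∀ j, 0 ≤ y j) ∧ (⨅ j, y j) = 1}))
    (hmX : mX = sInf (gX '' {x : Fin d → ℝ | (∀ j, 0 ≤ x j) ∧ (⨅ j, x j) = 1})) :
    ((γ < 1 / mV → mX = mV) ∧ (1 / mV ≤ γ → mX = 1 / γ)) ∧
    ((γ < 1 / mV → mX⁻¹ = mV⁻¹) ∧ (1 / mV ≤ γ → mX⁻¹ = γ)) := by
  have : Nonempty (Fin d) := ⟨⟨0, hd⟩⟩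
  have hmX_eq : mX = min mV (1 / γ) := by
    rw [hmX, hmV]
    exact (congrArg sInf (image_congr fun x hx => hgX x hx.1)).trans
      (sInf_image_mixtureGauge hghomog hgmax hγ0)
  have hmV_pos : 0 < mV := by
    rw [hmV]
    exact one_pos.trans_le (DominatesMax.one_le_sInf_image_unitMinSet hgmax)
  have h_small : γ < 1 / mV → mX = mV := fun h => by
    rw [hmX_eq, min_eq_left ((lt_one_div hγ0 hmV_pos).1 h).le]
  have h_large : 1 / mV ≤ γ → mX = 1 / γ := fun h => by
    rw [hmX_eq, min_eq_right ((one_div_le hmV_pos hγ0).1 h)]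
  exact ⟨⟨h_small, h_large⟩, fun h => by rw [h_small h],
    fun h => by rw [h_large h, one_div, inv_inv]⟩

/-- residual tail dependence of the Huser–Wadsworth mixture, Section 4.3 of
the paper: for a gauge function `g_V ≥ max` and `γ ∈ (0,1]`, with
`g_X(x) = min_{s ∈ [0, min(x)/γ]} {s + g_V(x - γs𝟙)}` and
`m_V = min_{y : min_j y_j = 1} g_V(y)`, the minimum of `g_X` over `{x : min_j x_j = 1}`
equals `m_V` if `γ < 1/m_V` and equals `1/γ` if `γ ≥ 1/m_V`; equivalently, with
`η^V = 1/m_V` and `η^X` the reciprocal of that minimum, `η^X = η^V` if `γ < η^V` and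
`η^X = γ` if `η^V ≤ γ ≤ 1`. -/
theorem eta_of_mixture
    {d : ℕ} (hd : 0 < d)
    (gV : (Fin d → ℝ) → ℝ) (hgcont : Continuous gV)
    (hghomog : ∀ t : ℝ, 0 < t → ∀ x, gV (t • x) = t * gV x)
    (hgmax : ∀ x : Fin d → ℝ, (∀ j, 0 ≤ x j) → ∀ j, x j ≤ gV x)
    (γ : ℝ) (hγ0 : 0 < γ) (hγ1 : γ ≤ 1)
    (gX : (Fin d → ℝ) → ℝ)
    (hgX : ∀ x : Fin d → ℝ, (∀ j, 0 ≤ x j) →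
      gX x = sInf ((fun s => s + gV (fun j => x j - γ * s)) ''
        Set.Icc (0:ℝ) ((⨅ j, x j) / γ)))
    (mV mX : ℝ)
    (hmV : mV = sInf (gV '' {y : Fin d → ℝ | (∀ j, 0 ≤ y j) ∧ (⨅ j, y j) = 1}))
    (hmX : mX = sInf (gX '' {x : Fin d → ℝ | (∀ j, 0 ≤ x j) ∧ (⨅ j, x j) = 1})) :
    ((γ < 1 / mV → mX = mV) ∧ (1 / mV ≤ γ → mX = 1 / γ)) ∧
    ((γ < 1 / mV → mX⁻¹ = mV⁻¹) ∧ (1 / mV ≤ γ → mX⁻¹ = γ)) :=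
  eta_of_mixture_general hd gV hghomog hgmax γ hγ0 gX hgX mV mX hmV hmX
end

section
/- Let g_V : [0,∞)² → [0,∞) be continuous and positively 1-homogeneous with g_V(x,y) ≥ max(x,y) for all x,y ≥ 0, let γ ∈ (0,1), and define g_X(x,y) = min_{s ∈ [0, min(x,y)/γ]} { s + g_V(x − γs, y − γs) }. Then for every α ∈ [0,1], g_X(α,1) ≥ 1, with g_X(α,1) = 1 if and only if g_V(α,1) = 1, and in that case the minimum defining g_X(α,1) is attained only at s = 0. Consequently, the maximal α ∈ [0,1] with g_X(α,1) = 1 equals the maximal α ∈ [0,1] with g_V(α,1) = 1, i.e., the conditional extremes index α_X of X = γS1 + V equals that of V. -/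
open Filter Topology

/-- conditional extremes index of the Huser–Wadsworth mixture, Section 4.3
of the paper: for a bivariate gauge function `g_V ≥ max`, `γ ∈ (0,1)`, and
`g_X(x,y) = min_{s ∈ [0, min(x,y)/γ]} {s + g_V(x-γs, y-γs)}`: for every `α ∈ [0,1]`,
`g_X(α,1) ≥ 1`, with equality iff `g_V(α,1) = 1`, in which case the minimum defining
`g_X(α,1)` is attained only at `s = 0`; consequently the maximal `α ∈ [0,1]` with
`g_X(α,1) = 1` equals the maximal `α ∈ [0,1]` with `g_V(α,1) = 1`. -/
theorem alpha_of_mixture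
    (gV : ℝ × ℝ → ℝ) (hgcont : Continuous gV)
    (hghomog : ∀ t : ℝ, 0 < t → ∀ p : ℝ × ℝ, gV (t • p) = t * gV p)
    (hgmax : ∀ p : ℝ × ℝ, 0 ≤ p.1 → 0 ≤ p.2 → max p.1 p.2 ≤ gV p)
    (γ : ℝ) (hγ0 : 0 < γ) (hγ1 : γ < 1)
    (gX : ℝ × ℝ → ℝ)
    (hgX : ∀ x y : ℝ, 0 ≤ x → 0 ≤ y →
      gX (x, y) = sInf ((fun s => s + gV (x - γ * s, y - γ * s)) ''
        Set.Icc (0:ℝ) (min x y / γ))) :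
    (∀ α : ℝ, 0 ≤ α → α ≤ 1 → 1 ≤ gX (α, 1)) ∧
    (∀ α : ℝ, 0 ≤ α → α ≤ 1 → (gX (α, 1) = 1 ↔ gV (α, 1) = 1)) ∧
    (∀ α : ℝ, 0 ≤ α → α ≤ 1 → gX (α, 1) = 1 →
      ∀ s ∈ Set.Icc (0:ℝ) (min α 1 / γ),
        s + gV (α - γ * s, 1 - γ * s) = gX (α, 1) → s = 0) ∧
    sSup {α : ℝ | α ∈ Set.Icc (0:ℝ) 1 ∧ gX (α, 1) = 1} =
      sSup {α : ℝ | α ∈ Set.Icc (0:ℝ) 1 ∧ gV (α, 1) = 1} := by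
  have key : ∀ α : ℝ, 0 ≤ α → α ≤ 1 →
      (1 ≤ gX (α, 1)) ∧ (gX (α, 1) = 1 ↔ gV (α, 1) = 1) ∧
      (∀ s ∈ Set.Icc (0:ℝ) (min α 1 / γ),
        s + gV (α - γ * s, 1 - γ * s) = gX (α, 1) → gX (α, 1) = 1 → s = 0) := by
    intro α hα0 hα1
    set f : ℝ → ℝ := fun s => s + gV (α - γ * s, 1 - γ * s) with hf
    have hmin0 : 0 ≤ min α 1 := le_min hα0 zero_le_one
    have hIcc : (0:ℝ) ∈ Set.Icc (0:ℝ) (min α 1 / γ) :=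
      ⟨le_refl _, div_nonneg hmin0 hγ0.le⟩
    have hbound : ∀ s ∈ Set.Icc (0:ℝ) (min α 1 / γ), 1 + (1 - γ) * s ≤ f s := by
      intro s hs
      have hs0 := hs.1
      have hγs : γ * s ≤ min α 1 := by
        have h2 := hs.2
        have := (le_div_iff₀ hγ0).mp h2
        nlinarith
      have h1 : 0 ≤ α - γ * s := by have := min_le_left α 1; linarith
      have h2 : 0 ≤ 1 - γ * s := by have := min_le_right α 1; linarith
      have hm := hgmax (α - γ * s, 1 - γ * s) h1 h2
      have h3 : 1 - γ * s ≤ gV (α - γ * s, 1 - γ * s) :=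
        le_trans (le_max_right _ _) hm
      simp only [hf]
      nlinarith
    have hgXeq := hgX α 1 hα0 zero_le_one
    have hne : (f '' Set.Icc 0 (min α 1 / γ)).Nonempty :=
      ⟨f 0, Set.mem_image_of_mem f hIcc⟩
    have hlb : ∀ y ∈ f '' Set.Icc 0 (min α 1 / γ), 1 ≤ y := by
      rintro y ⟨s, hs, rfl⟩
      have := hbound s hs
      nlinarith [hs.1]
    have h1le : 1 ≤ gX (α, 1) := by
      rw [hgXeq]; exact le_csInf hne hlb
    have hcomp : IsCompact (f '' Set.Icc 0 (min α 1 / γ)) := by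
      apply isCompact_Icc.image
      exact continuous_id.add (hgcont.comp (by fun_prop))
    have hmem : gX (α, 1) ∈ f '' Set.Icc 0 (min α 1 / γ) := by
      rw [hgXeq]; exact hcomp.sInf_mem hne
    have hattain : ∀ s ∈ Set.Icc (0:ℝ) (min α 1 / γ),
        f s = gX (α, 1) → gX (α, 1) = 1 → s = 0 := by
      intro s hs hfs hX1
      have := hbound s hs
      rw [hfs, hX1] at this
      nlinarith [hs.1]
    refine ⟨h1le, ⟨fun hX1 => ?_, fun hV1 => ?_⟩, hattain⟩
    · obtain ⟨s, hs, hfs⟩ := hmem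
      have hs0 : s = 0 := hattain s hs hfs hX1
      rw [hs0] at hfs
      simp only [hf, mul_zero, sub_zero, zero_add] at hfs
      rw [hfs, hX1]
    · have hV : f 0 = 1 := by simp only [hf, mul_zero, sub_zero, zero_add, hV1]
      have hle : gX (α, 1) ≤ 1 := by
        rw [hgXeq]
        refine le_trans (csInf_le ?_ (Set.mem_image_of_mem f hIcc)) (le_of_eq hV)
        exact ⟨1, fun y hy => hlb y hy⟩
      linarith
  refine ⟨fun α h0 h1 => (key α h0 h1).1,
    fun α h0 h1 => (key α h0 h1).2.1,
    fun α h0 h1 hX1 s hs hfs => (key α h0 h1).2.2 s hs hfs hX1, ?_⟩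
  congr 1
  ext α
  simp only [Set.mem_setOf_eq, Set.mem_Icc]
  exact and_congr_right fun hα => (key α hα.1 hα.2).2.1
end
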